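/- For the two problems: minimize f₁(x) = x₁x₂+x₂x₃+x₃x₁+x₄x₅+x₅x₆+x₆x₄ and f₂(x) = x₁x₂+x₂x₃+x₃x₄+x₄x₅+x₅x₆+x₆x₁ subject to Σᵢ xᵢ² ≤ 1 in ℝ⁶, the optimal values differ (−1/2 vs −1), and the sets of optimal solutions are disjoint: no x with Σxᵢ²≤1 simultaneously minimizes both. -/
import Mathlib


set_option maxHeartbeats 1000000 in
/-- The two non-convex counterexample QCQPs over the unit ball in ℝ⁶ have
different optimal values (−1/2 vs −1), and their optimal solution sets are disjoint. -/
theorem stmt_6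
    (f₁ f₂ : (Fin 6 → ℝ) → ℝ)
    (hf₁ : ∀ x, f₁ x = x 0 * x 1 + x 1 * x 2 + x 2 * x 0 +
        x 3 * x 4 + x 4 * x 5 + x 5 * x 3)
    (hf₂ : ∀ x, f₂ x = x 0 * x 1 + x 1 * x 2 + x 2 * x 3 +
        x 3 * x 4 + x 4 * x 5 + x 5 * x 0)
    (B : Set (Fin 6 → ℝ)) (hB : B = {x | (∑ i, (x i)^2) ≤ 1}) :
    sInf (f₁ '' B) = -(1/2) ∧ sInf (f₂ '' B) = -1 ∧
    sInf (f₁ '' B) ≠ sInf (f₂ '' B) ∧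
    ∀ x ∈ B, ¬((∀ y ∈ B, f₁ x ≤ f₁ y) ∧ (∀ y ∈ B, f₂ x ≤ f₂ y)) := by
  subst hB
  set a : ℝ := Real.sqrt (1/2) with ha
  have ha2 : a ^ 2 = 1/2 := Real.sq_sqrt (by norm_num)
  set b : ℝ := Real.sqrt (1/6) with hb
  have hb2 : b ^ 2 = 1/6 := Real.sq_sqrt (by norm_num)
  set w₁ : Fin 6 → ℝ := ![a, -a, 0, 0, 0, 0] with hw₁
  set w₂ : Fin 6 → ℝ := ![b, -b, b, -b, b, -b] with hw₂
  have hw₁B : w₁ ∈ {x : Fin 6 → ℝ | (∑ i, (x i)^2) ≤ 1} := by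
    simp only [Set.mem_setOf_eq, Fin.sum_univ_six]
    show a^2 + (-a)^2 + (0:ℝ)^2 + 0^2 + 0^2 + 0^2 ≤ 1
    nlinarith [ha2]
  have hw₂B : w₂ ∈ {x : Fin 6 → ℝ | (∑ i, (x i)^2) ≤ 1} := by
    simp only [Set.mem_setOf_eq, Fin.sum_univ_six]
    show b^2 + (-b)^2 + b^2 + (-b)^2 + b^2 + (-b)^2 ≤ 1
    nlinarith [hb2]
  have hf₁w : f₁ w₁ = -(1/2) := by
    rw [hf₁]
    show a * -a + -a * 0 + 0 * a + 0 * 0 + 0 * 0 + 0 * 0 = -(1/2)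
    nlinarith [ha2]
  have hf₂w : f₂ w₂ = -1 := by
    rw [hf₂]
    show b * -b + -b * b + b * -b + -b * b + b * -b + -b * b = -1
    nlinarith [hb2]
  have lb₁ : ∀ v ∈ f₁ '' {x : Fin 6 → ℝ | (∑ i, (x i)^2) ≤ 1}, -(1/2) ≤ v := by
    rintro v ⟨x, hx, rfl⟩
    simp only [Set.mem_setOf_eq, Fin.sum_univ_six] at hx
    rw [hf₁]
    nlinarith [sq_nonneg (x 0 + x 1 + x 2), sq_nonneg (x 3 + x 4 + x 5)]
  have lb₂ : ∀ v ∈ f₂ '' {x : Fin 6 → ℝ | (∑ i, (x i)^2) ≤ 1}, -1 ≤ v := by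
    rintro v ⟨x, hx, rfl⟩
    simp only [Set.mem_setOf_eq, Fin.sum_univ_six] at hx
    rw [hf₂]
    nlinarith [sq_nonneg (x 0 + x 1), sq_nonneg (x 1 + x 2), sq_nonneg (x 2 + x 3),
      sq_nonneg (x 3 + x 4), sq_nonneg (x 4 + x 5), sq_nonneg (x 5 + x 0)]
  have h1 : sInf (f₁ '' {x : Fin 6 → ℝ | (∑ i, (x i)^2) ≤ 1}) = -(1/2) := by
    apply le_antisymm
    · exact csInf_le ⟨-(1/2), lb₁⟩ ⟨w₁, hw₁B, hf₁w⟩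
    · exact le_csInf ⟨f₁ w₁, ⟨w₁, hw₁B, rfl⟩⟩ lb₁
  have h2 : sInf (f₂ '' {x : Fin 6 → ℝ | (∑ i, (x i)^2) ≤ 1}) = -1 := by
    apply le_antisymm
    · exact csInf_le ⟨-1, lb₂⟩ ⟨w₂, hw₂B, hf₂w⟩
    · exact le_csInf ⟨f₂ w₂, ⟨w₂, hw₂B, rfl⟩⟩ lb₂
  refine ⟨h1, h2, by rw [h1, h2]; norm_num, ?_⟩
  rintro x hx ⟨hm1, hm2⟩
  have hx1 : f₁ x ≤ -(1/2) := hf₁w ▸ hm1 w₁ hw₁B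
  have hx2 : f₂ x ≤ -1 := hf₂w ▸ hm2 w₂ hw₂B
  simp only [Set.mem_setOf_eq, Fin.sum_univ_six] at hx
  rw [hf₁ x] at hx1
  rw [hf₂ x] at hx2
  have hk : (x 0 + x 1)^2 + (x 1 + x 2)^2 + (x 2 + x 3)^2 + (x 3 + x 4)^2 +
      (x 4 + x 5)^2 + (x 5 + x 0)^2 =
      2*(x 0 * x 1 + x 1 * x 2 + x 2 * x 3 + x 3 * x 4 + x 4 * x 5 + x 5 * x 0) +
      2*(x 0 ^ 2 + x 1 ^ 2 + x 2 ^ 2 + x 3 ^ 2 + x 4 ^ 2 + x 5 ^ 2) := by ring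
  have s01 := sq_nonneg (x 0 + x 1)
  have s12 := sq_nonneg (x 1 + x 2)
  have s23 := sq_nonneg (x 2 + x 3)
  have s34 := sq_nonneg (x 3 + x 4)
  have s45 := sq_nonneg (x 4 + x 5)
  have s50 := sq_nonneg (x 5 + x 0)
  have z01 : x 0 + x 1 = 0 := by
    have h : (x 0 + x 1)^2 = 0 := le_antisymm (by linarith) s01
    exact sq_eq_zero_iff.mp h
  have z12 : x 1 + x 2 = 0 := by
    have h : (x 1 + x 2)^2 = 0 := le_antisymm (by linarith) s12
    exact sq_eq_zero_iff.mp h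
  have z23 : x 2 + x 3 = 0 := by
    have h : (x 2 + x 3)^2 = 0 := le_antisymm (by linarith) s23
    exact sq_eq_zero_iff.mp h
  have z34 : x 3 + x 4 = 0 := by
    have h : (x 3 + x 4)^2 = 0 := le_antisymm (by linarith) s34
    exact sq_eq_zero_iff.mp h
  have z45 : x 4 + x 5 = 0 := by
    have h : (x 4 + x 5)^2 = 0 := le_antisymm (by linarith) s45
    exact sq_eq_zero_iff.mp h
  have e1 : x 1 = -x 0 := by linarith
  have e2 : x 2 = x 0 := by linarith
  have e3 : x 3 = -x 0 := by linarith
  have e4 : x 4 = x 0 := by linarith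
  have e5 : x 5 = -x 0 := by linarith
  rw [e1, e2, e3, e4, e5] at hx1 hx
  nlinarith [hx1, hx]
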